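/- For every integer p ≥ 2 and every n ≥ 1, n · ∑_{k=1}^n ((−1)^{k−1}/k) · binom(n,k) · A_n(p,k) = binom(pn−1, n−1), where A_n(p,k) = (k/(pn+k)) binom(pn+k, n). -/

import Mathlib

/-!
Since `n · A_n(p,k) = k · binom(pn+k-1, n-1)`, the `k`-th summand times `n` is
`(-1)^(k-1) binom(n,k) binom(m+k, n-1)` with `m = pn - 1`. The full alternating sum over
`0 ≤ k ≤ n` is the `n`-th forward difference of the degree `n-1` polynomial `x ↦ binom(x, n-1)`
at `m`, hence vanishes; what remains is the `k = 0` term `binom(m, n-1)`.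
-/

/-- The Fuss-Catalan (Raney) numbers `A_n(p,k)` as rationals. -/
noncomputable def raney (p k n : ℕ) : ℚ :=
  if n = 0 then 1 else (k : ℚ) / (p * n + k) * ((p * n + k).choose n : ℚ)

open Finset fwdDiff

theorem fwdDiff_iter_choose_eq_zero_of_lt {r n : ℕ} (h : r < n) (y : ℕ) :
    (Δ_[1])^[n] (fun x ↦ x.choose r : ℕ → ℤ) y = 0 := by
  obtain ⟨k, rfl⟩ := Nat.exists_eq_add_of_lt h
  have hconst : (Δ_[1])^[r] (fun x ↦ x.choose r : ℕ → ℤ) = fun _ ↦ 1 := by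
    simpa using fwdDiff_iter_choose 0 r
  rw [show r + k + 1 = k + 1 + r by ring, Function.iterate_add_apply, hconst,
    Function.iterate_succ_apply]
  simp [fwdDiff_iter_eq_sum_shift]

theorem sum_range_neg_one_pow_mul_choose_mul_choose_add_eq_zero {r n : ℕ} (h : r < n) (m : ℕ) :
    ∑ k ∈ range (n + 1), (-1 : ℤ) ^ k * n.choose k * (m + k).choose r = 0 := by
  have hΔ := fwdDiff_iter_choose_eq_zero_of_lt h m
  rw [fwdDiff_iter_eq_sum_shift] at hΔ
  simp only [smul_eq_mul, mul_one] at hΔ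
  have hsign : ∀ k ∈ range (n + 1), (-1 : ℤ) ^ k * n.choose k * (m + k).choose r =
      (-1) ^ n * ((-1) ^ (n - k) * n.choose k * (m + k).choose r) := by
    intro k hk
    have hsq : ((-1 : ℤ) ^ (n - k)) ^ 2 = 1 := by rw [← pow_mul, pow_mul', neg_one_sq, one_pow]
    rw [← pow_sub_mul_pow (-1 : ℤ) (Nat.lt_succ_iff.mp (mem_range.mp hk))]
    linear_combination (-(-1 : ℤ) ^ k * n.choose k * (m + k).choose r) * hsq
  rw [sum_congr rfl hsign, ← mul_sum, hΔ, mul_zero]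

theorem sum_Icc_neg_one_pow_mul_choose_mul_choose_add {r n : ℕ} (h : r < n) (m : ℕ) :
    ∑ k ∈ Icc 1 n, (-1 : ℤ) ^ (k - 1) * n.choose k * (m + k).choose r = m.choose r := by
  have h0 := sum_range_neg_one_pow_mul_choose_mul_choose_add_eq_zero h m
  rw [range_eq_Ico, sum_eq_sum_Ico_succ_bot n.succ_pos, Nat.succ_eq_add_one, zero_add,
    Ico_add_one_right_eq_Icc] at h0
  have hsign : ∀ k ∈ Icc 1 n, (-1 : ℤ) ^ (k - 1) * n.choose k * (m + k).choose r =
      -((-1) ^ k * n.choose k * (m + k).choose r) := by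
    intro k hk
    obtain ⟨j, rfl⟩ := Nat.exists_eq_add_of_le' (mem_Icc.mp hk).1
    rw [Nat.add_sub_cancel, pow_succ]
    ring
  rw [sum_congr rfl hsign, sum_neg_distrib]
  simpa [neg_eq_iff_add_eq_zero, add_comm] using h0

theorem natCast_mul_raney (p k : ℕ) {n : ℕ} (hn : 1 ≤ n) :
    (n : ℚ) * raney p k n = k * (p * n + k - 1).choose (n - 1) := by
  rw [raney, if_neg (by omega)]
  rcases Nat.eq_zero_or_pos (p * n + k) with h0 | hpos
  · obtain rfl : k = 0 := by omega
    simp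
  have hchoose := Nat.add_one_mul_choose_eq (p * n + k - 1) (n - 1)
  rw [Nat.sub_add_cancel hpos, Nat.sub_add_cancel hn] at hchoose
  have hq : (p * n + k : ℚ) ≠ 0 := by exact_mod_cast hpos.ne'
  have hcast : ((p * n + k).choose n : ℚ) * n = (p * n + k) * (p * n + k - 1).choose (n - 1) := by
    exact_mod_cast hchoose.symm
  calc (n : ℚ) * (k / (p * n + k) * (p * n + k).choose n)
      = k * ((p * n + k).choose n * n) / (p * n + k) := by ring
    _ = k * (p * n + k - 1).choose (n - 1) := by rw [hcast]; field_simp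

theorem stmt_9 (p : ℕ) (hp : 2 ≤ p) (n : ℕ) (hn : 1 ≤ n) :
    (n : ℚ) * ∑ k ∈ Finset.Icc 1 n, (-1 : ℚ) ^ (k - 1) / k * (n.choose k) * raney p k n =
      ((p * n - 1).choose (n - 1) : ℚ) := by
  have hpn : 0 < p * n := Nat.mul_pos (by omega) hn
  have hterm : ∀ k ∈ Icc 1 n, (n : ℚ) * ((-1) ^ (k - 1) / k * n.choose k * raney p k n) =
      (-1) ^ (k - 1) * n.choose k * (p * n - 1 + k).choose (n - 1) := by
    intro k hk
    have hk0 : (k : ℚ) ≠ 0 := by exact_mod_cast (Nat.one_le_iff_ne_zero.mp (mem_Icc.mp hk).1)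
    rw [show p * n - 1 + k = p * n + k - 1 by omega]
    calc _ = (-1) ^ (k - 1) * n.choose k / k * (n * raney p k n) := by ring
      _ = _ := by rw [natCast_mul_raney p k hn]; field_simp
  rw [mul_sum, sum_congr rfl hterm]
  exact_mod_cast sum_Icc_neg_one_pow_mul_choose_mul_choose_add (by omega : n - 1 < n) (p * n - 1)
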